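/- arXiv:2403.00841 — 3 statements merged into one kernel-verified Lean document; each statement's English description precedes it below -/
import Mathlib

section
/- Let β and π be policies (functions from states to probability distributions over actions) and x_β(s_t), x_π(s_t) be their realization plans, i.e., the product of the policy's probabilities of its own actions along the path to state s_t. Define for α ∈ [0,1] the policy μ(a|s) = (1−λ(s)) π(a|s) + λ(s) β(a|s) where λ(s) = α x_β(s) / ((1−α) x_π(s) + α x_β(s)) (assume the denominator is positive). Then the realization plan of μ satisfies x_μ(s) = (1−α) x_π(s) + α x_β(s) for every state s. -/
/-! The mixing weight `λ(s) = α x_β(s) / x(s)` is chosen so that multiplying the mixed action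
probability by the target plan `x(s) = (1-α) x_π(s) + α x_β(s)` cancels the denominator:
`x(s) μ(a|s) = (1-α) x_π(s) π(a|s) + α x_β(s) β(a|s) = x(a :: s)`. Hence `x` obeys the
recursion defining `realize μ`, and the two agree by induction on the history. -/

/-- States are modeled as finite histories of the player's own actions in a
tree (latest action first); a policy maps a history to action probabilities.
`realize π s` is the realization plan: the product of `π`'s probabilities of
its own actions along the path to `s`. -/
def realize {A : Type*} (π : List A → A → ℝ) : List A → ℝ
  | [] => 1
  | a :: s => realize π s * π s a

theorem realize_eq_of_forall_cons {A : Type*} (μ : List A → A → ℝ) (x : List A → ℝ)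
    (hnil : x [] = 1) (hcons : ∀ s a, x (a :: s) = x s * μ s a) :
    ∀ s, realize μ s = x s
  | [] => hnil.symm
  | a :: s => by rw [realize, hcons, realize_eq_of_forall_cons μ x hnil hcons s]

theorem mul_mix_div_self {K : Type*} [Field K] {d : K} (hd : d ≠ 0) (c p q : K) :
    d * ((1 - c / d) * p + c / d * q) = (d - c) * p + c * q := by
  field_simp

theorem realization_equivalence_general {A : Type*} (π β : List A → A → ℝ)
    (α : ℝ)
    (hden : ∀ s : List A, 0 < (1 - α) * realize π s + α * realize β s)
    (μ : List A → A → ℝ)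
    (hμ : ∀ s a, μ s a =
      (1 - α * realize β s / ((1 - α) * realize π s + α * realize β s)) * π s a +
      (α * realize β s / ((1 - α) * realize π s + α * realize β s)) * β s a) :
    ∀ s : List A, realize μ s = (1 - α) * realize π s + α * realize β s := by
  refine realize_eq_of_forall_cons μ _ (by simp [realize]) fun s a => ?_
  rw [hμ, mul_mix_div_self (hden s).ne', realize, realize]
  ring

/-- realization equivalence: the FSP mixture policy `μ` with
`λ(s) = α x_β(s) / ((1−α) x_π(s) + α x_β(s))` has realization plan
`x_μ(s) = (1−α) x_π(s) + α x_β(s)` at every state. -/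
theorem realization_equivalence {A : Type*} (π β : List A → A → ℝ)
    (α : ℝ) (hα0 : 0 ≤ α) (hα1 : α ≤ 1)
    (hden : ∀ s : List A, 0 < (1 - α) * realize π s + α * realize β s)
    (μ : List A → A → ℝ)
    (hμ : ∀ s a, μ s a =
      (1 - α * realize β s / ((1 - α) * realize π s + α * realize β s)) * π s a +
      (α * realize β s / ((1 - α) * realize π s + α * realize β s)) * β s a) :
    ∀ s : List A, realize μ s = (1 - α) * realize π s + α * realize β s :=
  realization_equivalence_general π β α hden μ hμ
end

section
/- With the mixture policy μ defined by λ(s) = α x_β(s)/((1−α)x_π(s) + α x_β(s)) as in the realization-equivalence construction, for every state s and action a the realization-weighted action probability satisfies x_μ(s) μ(a|s) = (1−α) x_π(s) π(a|s) + α x_β(s) β(a|s). -/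
/-- the FSP mixture policy `μ` satisfies
`x_μ(s) μ(a|s) = (1−α) x_π(s) π(a|s) + α x_β(s) β(a|s)` for all `s, a`. -/
theorem realization_weighted_mixture {A : Type*} (π β : List A → A → ℝ)
    (α : ℝ) (hα0 : 0 ≤ α) (hα1 : α ≤ 1)
    (hden : ∀ s : List A, 0 < (1 - α) * realize π s + α * realize β s)
    (μ : List A → A → ℝ)
    (hμ : ∀ s a, μ s a =
      (1 - α * realize β s / ((1 - α) * realize π s + α * realize β s)) * π s a +
      (α * realize β s / ((1 - α) * realize π s + α * realize β s)) * β s a) :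
    ∀ (s : List A) (a : A), realize μ s * μ s a =
      (1 - α) * realize π s * π s a + α * realize β s * β s a := by
  have key : ∀ (s : List A) (a : A),
      ((1 - α) * realize π s + α * realize β s) * μ s a =
      (1 - α) * realize π s * π s a + α * realize β s * β s a := by
    intro s a
    have h := (hden s).ne'
    rw [hμ s a]
    field_simp
    ring
  have hreal : ∀ s : List A,
      realize μ s = (1 - α) * realize π s + α * realize β s := by
    intro s
    induction s with
    | nil => simp [realize]
    | cons a s ih =>
      simp only [realize, ih]
      rw [key s a]
      ring
  intro s a
  rw [hreal s, key s a]
end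

section
/- In fictitious play with mixing parameters α_k = 1/k, the average policy's realization-weighted action probabilities satisfy x_{π_k}(s) π_k(a|s) = (1/k) Σ_{j=1}^{k} x_{β_j}(s) β_j(a|s), i.e., the k-th average policy is realization-equivalent to the uniform mixture of the best responses β_1, …, β_k. -/
/-- with mixing parameters `α_k = 1/k`, the k-th fictitious-play
average policy is realization-equivalent to the uniform mixture of the best
responses `β_1, …, β_k`:
`x_{π_k}(s) π_k(a|s) = (1/k) ∑_{j=1}^{k} x_{β_j}(s) β_j(a|s)`. -/
theorem fsp_average_uniform_mixture {A : Type*}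
    (β π : ℕ → List A → A → ℝ)
    (h1 : π 1 = β 1)
    (hden : ∀ k : ℕ, 2 ≤ k → ∀ s : List A,
      0 < (1 - 1 / (k : ℝ)) * realize (π (k - 1)) s + (1 / (k : ℝ)) * realize (β k) s)
    (hrec : ∀ k : ℕ, 2 ≤ k → ∀ (s : List A) (a : A), π k s a =
      (1 - (1 / (k : ℝ)) * realize (β k) s /
          ((1 - 1 / (k : ℝ)) * realize (π (k - 1)) s + (1 / (k : ℝ)) * realize (β k) s)) *
        π (k - 1) s a +
      ((1 / (k : ℝ)) * realize (β k) s /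
          ((1 - 1 / (k : ℝ)) * realize (π (k - 1)) s + (1 / (k : ℝ)) * realize (β k) s)) *
        β k s a) :
    ∀ k : ℕ, 1 ≤ k → ∀ (s : List A) (a : A),
      realize (π k) s * π k s a =
        (1 / (k : ℝ)) * ∑ j ∈ Finset.Icc 1 k, realize (β j) s * β j s a := by
  intro k hk
  induction k, hk using Nat.le_induction with
  | base =>
    intro s a
    simp [h1]
  | succ k hk ih =>
    have hK0 : (k : ℝ) ≠ 0 := Nat.cast_ne_zero.mpr (by omega)
    have hK10 : ((k : ℝ) + 1) ≠ 0 := by positivity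
    have h2 : 2 ≤ k + 1 := by omega
    -- realization plan of π k is the average of those of β 1..k
    have hR : ∀ s : List A,
        realize (π k) s = (1 / (k : ℝ)) * ∑ j ∈ Finset.Icc 1 k, realize (β j) s := by
      intro s
      induction s with
      | nil => simp [realize]; field_simp
      | cons a s ihs =>
        have := ih s a
        simp only [realize, this, Finset.mul_sum]
    -- denominator equality
    have hDpos := fun s => hden (k + 1) h2 s
    have hrec' := hrec (k + 1) h2
    simp only [Nat.add_sub_cancel, Nat.cast_add, Nat.cast_one] at hDpos hrec' ⊢
    -- realization plan of π (k+1)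
    have hR1 : ∀ s : List A,
        realize (π (k + 1)) s =
          (1 / ((k : ℝ) + 1)) * ∑ j ∈ Finset.Icc 1 (k + 1), realize (β j) s := by
      intro s
      induction s with
      | nil => simp [realize]; field_simp
      | cons a s ihs =>
        have hD := (hDpos s).ne'
        have hsum : ∑ j ∈ Finset.Icc 1 (k + 1), realize (β j) s
            = (∑ j ∈ Finset.Icc 1 k, realize (β j) s) + realize (β (k + 1)) s := by
          rw [Finset.sum_Icc_succ_top (by omega)]
        have hsuma : ∑ j ∈ Finset.Icc 1 (k + 1), realize (β j) (a :: s)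
            = (∑ j ∈ Finset.Icc 1 k, realize (β j) (a :: s)) + realize (β (k + 1)) (a :: s) := by
          rw [Finset.sum_Icc_succ_top (by omega)]
        have hS : ∑ j ∈ Finset.Icc 1 k, realize (β j) s = (k : ℝ) * realize (π k) s := by
          rw [hR s]; field_simp
        have hT : ∑ j ∈ Finset.Icc 1 k, realize (β j) s * β j s a
            = (k : ℝ) * (realize (π k) s * π k s a) := by
          rw [ih s a]; field_simp
        show realize (π (k + 1)) s * π (k + 1) s a = _
        rw [ihs, hrec' s a, hsum, hsuma, hS]
        simp only [realize]
        rw [hT]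
        have hKPB : (k : ℝ) * realize (π k) s + realize (β (k + 1)) s ≠ 0 := by
          intro h
          apply hD
          field_simp
          linarith [h]
        have hDen : (1 - 1 / ((k : ℝ) + 1)) * realize (π k) s + 1 / ((k : ℝ) + 1) * realize (β (k + 1)) s
            = ((k : ℝ) * realize (π k) s + realize (β (k + 1)) s) / ((k : ℝ) + 1) := by
          field_simp
          ring
        rw [hDen]
        field_simp
        ring
    intro s a
    have := hR1 (a :: s)
    simpa [realize, Finset.mul_sum] using this
end
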